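/- arXiv:2205.01385 — 5 statements merged into one kernel-verified Lean document; each statement's English description precedes it below -/
import Mathlib

section
/- For any partition Γ of {1,…,p} and any z ∈ ℝ^p, the group norm ‖z‖_{1,2} := Σ_{g∈Γ} ‖z_g‖₂ satisfies ‖z‖_{1,2} = min { ½‖u‖₂² + ½‖v‖₂² : u ∈ ℝ^p, v ∈ ℝ^{|Γ|}, u⊙v = z }, where (u⊙v)_g := v_g·u_g for each group g ∈ Γ (i.e. the block u_g of u is scaled by the scalar v_g). -/
/-!
Writing `N_j = Σ_{g i = j} z_i²` for the squared norm of the `j`-th block, the constraint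
`u ⊙ v = z` forces `N_j = v_j² · Σ_{g i = j} u_i²`, so AM-GM bounds `√N_j` by the `j`-th block
of the cost `½‖u‖² + ½‖v‖²`; summing over the blocks gives the lower bound. Equality holds for
`v_j = N_j^{1/4}` and `u_i = z_i / v_{g i}`, which balances the two halves on every block.
-/

open Finset

lemma sqrt_sq_mul_le {a b : ℝ} (hb : 0 ≤ b) : √(a ^ 2 * b) ≤ a ^ 2 / 2 + b / 2 := by
  have h := two_mul_le_add_sq |a| √b
  rw [sq_abs, Real.sq_sqrt hb] at h
  rw [Real.sqrt_mul (sq_nonneg a), Real.sqrt_sq_eq_abs]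
  linarith

section GroupSqNorm

variable {ι κ : Type*} [Fintype ι] [DecidableEq κ]

/-- The squared Euclidean norm `‖z_g‖₂²` of the block of `z` labelled `j` by `g`. -/
def groupSqNorm (g : ι → κ) (z : ι → ℝ) (j : κ) : ℝ :=
  ∑ i, if g i = j then z i ^ 2 else 0

variable (g : ι → κ)

lemma groupSqNorm_nonneg (z : ι → ℝ) (j : κ) : 0 ≤ groupSqNorm g z j :=
  sum_nonneg fun i _ => by split <;> positivity

lemma sq_le_groupSqNorm (z : ι → ℝ) (i : ι) : z i ^ 2 ≤ groupSqNorm g z (g i) := by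
  unfold groupSqNorm
  simpa using single_le_sum (f := fun i' => if g i' = g i then z i' ^ 2 else 0)
    (fun i' _ => by split <;> positivity) (mem_univ i)

lemma sum_groupSqNorm [Fintype κ] (z : ι → ℝ) : ∑ j, groupSqNorm g z j = ∑ i, z i ^ 2 := by
  unfold groupSqNorm
  rw [sum_comm]
  simp

lemma groupSqNorm_mul_comp (c : κ → ℝ) (u : ι → ℝ) (j : κ) :
    groupSqNorm g (fun i => c (g i) * u i) j = c j ^ 2 * groupSqNorm g u j := by
  unfold groupSqNorm
  rw [mul_sum]
  refine sum_congr rfl fun i _ => ?_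
  split_ifs with h
  · rw [← h, mul_pow]
  · rw [mul_zero]

lemma sum_sqrt_groupSqNorm_le [Fintype κ] {u z : ι → ℝ} {v : κ → ℝ}
    (huv : ∀ i, v (g i) * u i = z i) :
    ∑ j, √(groupSqNorm g z j) ≤ 1 / 2 * ∑ i, u i ^ 2 + 1 / 2 * ∑ j, v j ^ 2 := by
  obtain rfl : (fun i => v (g i) * u i) = z := funext huv
  calc ∑ j, √(groupSqNorm g (fun i => v (g i) * u i) j)
      ≤ ∑ j, (v j ^ 2 / 2 + groupSqNorm g u j / 2) := sum_le_sum fun j _ => by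
        rw [groupSqNorm_mul_comp]
        exact sqrt_sq_mul_le (groupSqNorm_nonneg g u j)
    _ = 1 / 2 * ∑ i, u i ^ 2 + 1 / 2 * ∑ j, v j ^ 2 := by
        rw [sum_add_distrib, ← sum_div, ← sum_div, sum_groupSqNorm]
        ring

noncomputable def optimalScale (z : ι → ℝ) (j : κ) : ℝ := √√(groupSqNorm g z j)

noncomputable def optimalFactor (z : ι → ℝ) (i : ι) : ℝ := (optimalScale g z (g i))⁻¹ * z i

lemma sq_optimalScale (z : ι → ℝ) (j : κ) : optimalScale g z j ^ 2 = √(groupSqNorm g z j) :=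
  Real.sq_sqrt (Real.sqrt_nonneg _)

/-- A vanishing scale means a vanishing block, so the junk value `0⁻¹ = 0` does no harm. -/
lemma optimalScale_mul_optimalFactor (z : ι → ℝ) (i : ι) :
    optimalScale g z (g i) * optimalFactor g z i = z i := by
  by_cases h : optimalScale g z (g i) = 0
  · have hN : groupSqNorm g z (g i) = 0 := by
      rw [← Real.sqrt_eq_zero (groupSqNorm_nonneg g z _), ← sq_optimalScale, h, sq, mul_zero]
    have hz : z i ^ 2 ≤ 0 := hN ▸ sq_le_groupSqNorm g z i
    rw [h, zero_mul, eq_comm, ← sq_eq_zero_iff]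
    exact le_antisymm hz (sq_nonneg _)
  · exact mul_inv_cancel_left₀ h (z i)

lemma cost_optimalFactor_optimalScale [Fintype κ] (z : ι → ℝ) :
    1 / 2 * ∑ i, optimalFactor g z i ^ 2 + 1 / 2 * ∑ j, optimalScale g z j ^ 2
      = ∑ j, √(groupSqNorm g z j) := by
  have hu : ∑ i, optimalFactor g z i ^ 2 = ∑ j, √(groupSqNorm g z j) := by
    rw [← sum_groupSqNorm g]
    refine sum_congr rfl fun j _ => ?_
    refine (groupSqNorm_mul_comp g (fun j => (optimalScale g z j)⁻¹) z j).trans ?_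
    rw [inv_pow, sq_optimalScale, inv_mul_eq_div, Real.div_sqrt]
  simp only [hu, sq_optimalScale]
  ring

end GroupSqNorm

/-- The partition `Γ` is encoded by the map `g` sending each index to its group. -/
theorem statement0_general {p d : ℕ} (g : Fin p → Fin d)
    (z : Fin p → ℝ) :
    IsLeast { c : ℝ | ∃ (u : Fin p → ℝ) (v : Fin d → ℝ),
        (∀ i, v (g i) * u i = z i) ∧
        c = (1/2) * ∑ i, (u i)^2 + (1/2) * ∑ j, (v j)^2 }
      (∑ j, Real.sqrt (∑ i, if g i = j then (z i)^2 else 0)) :=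
  ⟨⟨optimalFactor g z, optimalScale g z, optimalScale_mul_optimalFactor g z,
      (cost_optimalFactor_optimalScale g z).symm⟩,
    fun _ ⟨_, _, huv, hc⟩ => hc ▸ sum_sqrt_groupSqNorm_le g huv⟩

/-- Hadamard over-parameterization of the group ℓ₁-ℓ₂ norm.
The partition `Γ` of `{1,…,p}` is encoded by a surjective map `g : Fin p → Fin d`
assigning to each index its group.  For `z ∈ ℝ^p`,
`‖z‖_{1,2} = Σ_j ‖z_{g⁻¹(j)}‖₂`, and `(u ⊙ v)_i = v_{g i} * u_i`. -/
theorem statement0 {p d : ℕ} (g : Fin p → Fin d) (hg : Function.Surjective g)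
    (z : Fin p → ℝ) :
    IsLeast { c : ℝ | ∃ (u : Fin p → ℝ) (v : Fin d → ℝ),
        (∀ i, v (g i) * u i = z i) ∧
        c = (1/2) * ∑ i, (u i)^2 + (1/2) * ∑ j, (v j)^2 }
      (∑ j, Real.sqrt (∑ i, if g i = j then (z i)^2 else 0)) :=
  statement0_general g z
end

section
/- Strict differentiability away from zero coordinates: assume F₀ : ℝ^m → ℝ is convex with Lipschitz-continuous gradient, and define f₀(v) := sup over (ξ,α) with L^⊤α = −A^⊤ξ of φ(v,ξ,α) := −½‖v⊙α‖² − F₀*(ξ). If v ∈ ℝ^{|Γ|} satisfies v_g ≠ 0 for every group g, then f₀ is strictly differentiable at v. -/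
/-!
Write `y = (ξ, α)` and `q(w, α) = -½‖w ⊙ α‖²`. As `fZero A L g F₀ v` depends only on `v ∘ g`,
it suffices to treat `g = id` at a point `w` with no zero entry. Since `F₀` is finite everywhere,
`F₀*` is convex, lower semicontinuous and `F₀*(ξ) ≥ |ξᵢ| - C`, while `q(w, ·)` is coercive; so
the superlevel sets of `Φ_w(y) = q(w, α) - F₀*(ξ)` on the feasible set are compact, and for `u`
near `w` we get `f₀(u) = Φ_u(y(u))` for a maximiser `y(u)`. By concavity `Φ_w` decays
quadratically in `α` away from `y(w)`; with `|q(u, α) - q(w, α)| ≤ r(u) |q(w, α)|`, `r(u) → 0`,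
this forces `α(u) → α(w)`. Finally `f₀(u) - f₀(u')` lies between `q(u, α(u')) - q(u', α(u'))`
and `q(u, α(u)) - q(u', α(u))`, and strict differentiability of the polynomial `q` at
`(w, α(w))` makes both `∂_w q(w, α(w)) (u - u') + o(‖u - u'‖)`.
-/

open Matrix

/-- The convex conjugate of `F₀`, with values in `EReal`. -/
noncomputable def Fstar {m : ℕ} (F₀ : (Fin m → ℝ) → ℝ) (ξ : Fin m → ℝ) : EReal :=
  ⨆ z : Fin m → ℝ, (((∑ i, ξ i * z i) - F₀ z : ℝ) : EReal)

/-- The dual objective `φ(v,ξ,α) = −½‖v⊙α‖² − F₀*(ξ)`. -/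
noncomputable def phiDual {m p d : ℕ} (g : Fin p → Fin d) (F₀ : (Fin m → ℝ) → ℝ)
    (v : Fin d → ℝ) (α : Fin p → ℝ) (ξ : Fin m → ℝ) : EReal :=
  (((-(1/2)) * ∑ i, (v (g i) * α i)^2 : ℝ) : EReal) - Fstar F₀ ξ

/-- The dual function `f₀(v) = sup {φ(v,ξ,α) : L^⊤α = −A^⊤ξ}`
(the supremum, taken in `EReal`, is finite under the standing hypotheses,
and we read off its real value). -/
noncomputable def fZero {n m p d : ℕ}
    (A : Matrix (Fin m) (Fin n) ℝ) (L : Matrix (Fin p) (Fin n) ℝ)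
    (g : Fin p → Fin d) (F₀ : (Fin m → ℝ) → ℝ) (v : Fin d → ℝ) : ℝ :=
  (sSup { c : EReal | ∃ (ξ : Fin m → ℝ) (α : Fin p → ℝ),
      Lᵀ.mulVec α = -(Aᵀ.mulVec ξ) ∧ c = phiDual g F₀ v α ξ }).toReal

open Topology Filter Asymptotics

theorem hasStrictFDerivAt_of_forall_le_of_eq {E : Type*} [NormedAddCommGroup E] [NormedSpace ℝ E]
    {f : E → ℝ} {φ : E → E → ℝ} {D : E →L[ℝ] ℝ} {v : E} {s : Set E} (hs : s ∈ 𝓝 v)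
    (hle : ∀ w ∈ s, ∀ u ∈ s, φ w u ≤ f u) (heq : ∀ w ∈ s, φ w w = f w)
    (hφ : (fun x : E × E × E => φ x.2.2 x.1 - φ x.2.2 x.2.1 - D (x.1 - x.2.1))
      =o[𝓝 (v, v, v)] fun x => x.1 - x.2.1) :
    HasStrictFDerivAt f D v := by
  have hcomp (c : E × E → E) (hc : Tendsto c (𝓝 (v, v)) (𝓝 v)) :
      (fun x : E × E => ‖φ (c x) x.1 - φ (c x) x.2 - D (x.1 - x.2)‖) =o[𝓝 (v, v)]
        fun x => x.1 - x.2 :=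
    (hφ.comp_tendsto (continuousAt_fst.prodMk_nhds (continuousAt_snd.prodMk_nhds hc))).norm_left
  refine .of_isLittleO <| IsBigO.trans_isLittleO (.of_bound 1 ?_)
    ((hcomp Prod.fst continuousAt_fst).add (hcomp Prod.snd continuousAt_snd))
  filter_upwards [prod_mem_nhds hs hs] with x ⟨hx₁, hx₂⟩
  set e₁ := φ x.1 x.1 - φ x.1 x.2 - D (x.1 - x.2)
  set e₂ := φ x.2 x.1 - φ x.2 x.2 - D (x.1 - x.2)
  have hupper : f x.1 - f x.2 - D (x.1 - x.2) ≤ e₁ := by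
    linarith [hle x.1 hx₁ x.2 hx₂, heq x.1 hx₁]
  have hlower : e₂ ≤ f x.1 - f x.2 - D (x.1 - x.2) := by
    linarith [hle x.2 hx₂ x.1 hx₁, heq x.2 hx₂]
  rw [one_mul, Real.norm_eq_abs, Real.norm_of_nonneg (by positivity), Real.norm_eq_abs,
    Real.norm_eq_abs, abs_le]
  constructor <;> linarith [le_abs_self e₁, neg_abs_le e₂, abs_nonneg e₁, abs_nonneg e₂]

theorem HasStrictFDerivAt.isLittleO_sub_of_continuousAt {𝕜 E F G : Type*}
    [NontriviallyNormedField 𝕜] [NormedAddCommGroup E] [NormedSpace 𝕜 E]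
    [NormedAddCommGroup F] [NormedSpace 𝕜 F] [NormedAddCommGroup G] [NormedSpace 𝕜 G]
    {Q : E × F → G} {Q' : E × F →L[𝕜] G} {v : E} {a : E → F}
    (hQ : HasStrictFDerivAt Q Q' (v, a v)) (ha : ContinuousAt a v) :
    (fun x : E × E × E => Q (x.1, a x.2.2) - Q (x.2.1, a x.2.2)
        - Q'.comp (.inl 𝕜 E F) (x.1 - x.2.1)) =o[𝓝 (v, v, v)] fun x => x.1 - x.2.1 := by
  have hlim : Tendsto (fun x : E × E × E => ((x.1, a x.2.2), (x.2.1, a x.2.2))) (𝓝 (v, v, v))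
      (𝓝 ((v, a v), (v, a v))) := by
    have ha' : Tendsto (fun x : E × E × E => a x.2.2) (𝓝 (v, v, v)) (𝓝 (a v)) :=
      ha.tendsto.comp (continuous_snd.comp continuous_snd).continuousAt
    exact (continuousAt_fst.prodMk_nhds ha').prodMk_nhds
      ((continuous_fst.comp continuous_snd).continuousAt.prodMk_nhds ha')
  refine ((hQ.isLittleO.comp_tendsto hlim).trans_isBigO ?_).congr_left fun x => ?_
  · exact ((ContinuousLinearMap.inl 𝕜 E F).isBigO_comp (fun x : E × E × E => x.1 - x.2.1)
      _).congr_left fun x => by simp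
  · simp only [Function.comp_apply, Prod.mk_sub_mk, sub_self, ContinuousLinearMap.comp_apply,
      ContinuousLinearMap.inl_apply]

theorem exists_isMaxOn_of_isCompact_superlevel {X β : Type*} [TopologicalSpace X] [T2Space X]
    [LinearOrder β] {f : X → β} {s : Set X} (hne : s.Nonempty)
    (hK : ∀ b, IsCompact {y ∈ s | b ≤ f y}) : ∃ a ∈ s, IsMaxOn f s a := by
  obtain ⟨y₀, hy₀⟩ := hne
  have husc : UpperSemicontinuousOn f {y ∈ s | f y₀ ≤ f y} := by
    refine upperSemicontinuousOn_iff_preimage_Ici.2 fun b =>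
      ⟨_, (hK (max (f y₀) b)).isClosed, ?_⟩
    ext y
    simp only [Set.mem_inter_iff, Set.mem_ofPred_eq, Set.mem_preimage, Set.mem_Ici, max_le_iff]
    tauto
  obtain ⟨a, ⟨has, -⟩, hmax⟩ := husc.exists_isMaxOn (s := {y ∈ s | f y₀ ≤ f y})
    ⟨y₀, hy₀, le_rfl⟩ (hK (f y₀))
  refine ⟨a, has, fun y hy => ?_⟩
  rcases le_total (f y₀) (f y) with h | h
  · exact hmax ⟨hy, h⟩
  · exact h.trans (hmax ⟨hy₀, le_rfl⟩)

section Conjugate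

variable {m : ℕ} (F₀ : (Fin m → ℝ) → ℝ)

theorem coe_le_Fstar (ξ z : Fin m → ℝ) : ((ξ ⬝ᵥ z - F₀ z : ℝ) : EReal) ≤ Fstar F₀ ξ :=
  le_iSup (fun z => (((∑ i, ξ i * z i) - F₀ z : ℝ) : EReal)) z

theorem Fstar_ne_bot (ξ : Fin m → ℝ) : Fstar F₀ ξ ≠ ⊥ :=
  ne_bot_of_le_ne_bot (EReal.coe_ne_bot _) (coe_le_Fstar F₀ ξ 0)

theorem Fstar_le_coe_iff {ξ : Fin m → ℝ} {r : ℝ} :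
    Fstar F₀ ξ ≤ r ↔ ∀ z, ξ ⬝ᵥ z - F₀ z ≤ r := by
  simp only [Fstar, iSup_le_iff, EReal.coe_le_coe_iff, dotProduct]

variable {F₀}

theorem le_toReal_Fstar {ξ : Fin m → ℝ} (hξ : Fstar F₀ ξ ≠ ⊤) (z : Fin m → ℝ) :
    ξ ⬝ᵥ z - F₀ z ≤ (Fstar F₀ ξ).toReal :=
  (Fstar_le_coe_iff F₀).1 (EReal.coe_toReal hξ (Fstar_ne_bot F₀ ξ)).ge z

theorem toReal_Fstar_le {ξ : Fin m → ℝ} {r : ℝ} (h : Fstar F₀ ξ ≤ r) :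
    (Fstar F₀ ξ).toReal ≤ r := by
  simpa using EReal.toReal_le_toReal h (Fstar_ne_bot F₀ ξ) (EReal.coe_ne_top r)

theorem neg_le_toReal_Fstar {ξ : Fin m → ℝ} (hξ : Fstar F₀ ξ ≠ ⊤) :
    -F₀ 0 ≤ (Fstar F₀ ξ).toReal := by
  simpa using le_toReal_Fstar hξ 0

theorem Fstar_smul_add_smul_le {ξ₁ ξ₂ : Fin m → ℝ} (h₁ : Fstar F₀ ξ₁ ≠ ⊤)
    (h₂ : Fstar F₀ ξ₂ ≠ ⊤) {a b : ℝ} (ha : 0 ≤ a) (hb : 0 ≤ b) (hab : a + b = 1) :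
    Fstar F₀ (a • ξ₁ + b • ξ₂) ≤
      ((a * (Fstar F₀ ξ₁).toReal + b * (Fstar F₀ ξ₂).toReal : ℝ) : EReal) := by
  refine (Fstar_le_coe_iff F₀).2 fun z => ?_
  rw [add_dotProduct, smul_dotProduct, smul_dotProduct, smul_eq_mul, smul_eq_mul]
  have hF : F₀ z = a * F₀ z + b * F₀ z := by rw [← add_mul, hab, one_mul]
  nlinarith [mul_le_mul_of_nonneg_left (le_toReal_Fstar h₁ z) ha,
    mul_le_mul_of_nonneg_left (le_toReal_Fstar h₂ z) hb]

theorem abs_le_toReal_Fstar_add {ξ : Fin m → ℝ} (hξ : Fstar F₀ ξ ≠ ⊤) (i : Fin m) :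
    |ξ i| ≤ (Fstar F₀ ξ).toReal + max (F₀ (Pi.single i 1)) (F₀ (Pi.single i (-1))) := by
  have hpos := le_toReal_Fstar hξ (Pi.single i 1)
  have hneg := le_toReal_Fstar hξ (Pi.single i (-1))
  rw [dotProduct_single] at hpos hneg
  rw [abs_le]
  constructor <;> linarith [le_max_left (F₀ (Pi.single i 1)) (F₀ (Pi.single i (-1))),
    le_max_right (F₀ (Pi.single i 1)) (F₀ (Pi.single i (-1)))]

end Conjugate

section DualProblem

variable {n m p : ℕ} {A : Matrix (Fin m) (Fin n) ℝ} {L : Matrix (Fin p) (Fin n) ℝ}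
  {F₀ : (Fin m → ℝ) → ℝ}

noncomputable def quadTerm (w α : Fin p → ℝ) : ℝ := -(1/2) * ∑ i, (w i * α i) ^ 2

variable (A L F₀) in
def dualDom : Set ((Fin m → ℝ) × (Fin p → ℝ)) :=
  {y | Lᵀ *ᵥ y.2 = -(Aᵀ *ᵥ y.1) ∧ Fstar F₀ y.1 ≠ ⊤}

-- Agrees with `phiDual` on `dualDom`; off it, `toReal ⊤ = 0` makes the value meaningless.
variable (F₀) in
noncomputable def dualObj (w : Fin p → ℝ) (y : (Fin m → ℝ) × (Fin p → ℝ)) : ℝ :=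
  quadTerm w y.2 - (Fstar F₀ y.1).toReal

theorem quadTerm_nonpos (w α : Fin p → ℝ) : quadTerm w α ≤ 0 := by
  unfold quadTerm
  nlinarith [Finset.sum_nonneg fun i (_ : i ∈ Finset.univ) => sq_nonneg (w i * α i)]

theorem sq_le_neg_two_mul_quadTerm (w α : Fin p → ℝ) (i : Fin p) :
    (w i * α i) ^ 2 ≤ -2 * quadTerm w α := by
  unfold quadTerm
  nlinarith [Finset.single_le_sum (fun j _ => sq_nonneg (w j * α j)) (Finset.mem_univ i)]

theorem quadTerm_half_smul_add (w α β : Fin p → ℝ) :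
    quadTerm w ((1/2 : ℝ) • (α + β)) =
      quadTerm w α / 2 + quadTerm w β / 2 - quadTerm w (α - β) / 4 := by
  simp only [quadTerm, Pi.smul_apply, Pi.add_apply, Pi.sub_apply, smul_eq_mul, Finset.mul_sum,
    Finset.sum_div, ← Finset.sum_add_distrib, ← Finset.sum_sub_distrib]
  exact Finset.sum_congr rfl fun i _ => by ring

theorem abs_quadTerm_sub_le {w : Fin p → ℝ} (hw : ∀ i, w i ≠ 0) (u α : Fin p → ℝ) :
    |quadTerm u α - quadTerm w α| ≤ (∑ i, |u i ^ 2 / w i ^ 2 - 1|) * -quadTerm w α := by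
  have hterm (i : Fin p) :
      (u i ^ 2 / w i ^ 2 - 1) * (w i * α i) ^ 2 = (u i * α i) ^ 2 - (w i * α i) ^ 2 := by
    field_simp [hw i]
  set c : Fin p → ℝ := fun i => u i ^ 2 / w i ^ 2 - 1
  have hdiff : quadTerm u α - quadTerm w α = -(∑ i, c i * (w i * α i) ^ 2) / 2 := by
    simp only [quadTerm, c, hterm, Finset.sum_sub_distrib]
    ring
  calc |quadTerm u α - quadTerm w α| = |∑ i, c i * (w i * α i) ^ 2| / 2 := by
        rw [hdiff, abs_div, abs_neg, abs_two]
    _ ≤ (∑ i, |c i| * (w i * α i) ^ 2) / 2 := by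
        gcongr
        refine (Finset.abs_sum_le_sum_abs _ _).trans_eq (Finset.sum_congr rfl fun i _ => ?_)
        rw [abs_mul, abs_of_nonneg (sq_nonneg (w i * α i))]
    _ ≤ (∑ i, (∑ j, |c j|) * (w i * α i) ^ 2) / 2 := by
        gcongr with i
        exact Finset.single_le_sum (fun j _ => abs_nonneg (c j)) (Finset.mem_univ i)
    _ = (∑ j, |c j|) * -quadTerm w α := by
        simp only [quadTerm, ← Finset.mul_sum]
        ring

theorem contDiff_quadTerm :
    ContDiff ℝ ⊤ fun x : (Fin p → ℝ) × (Fin p → ℝ) => quadTerm x.1 x.2 := by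
  unfold quadTerm
  fun_prop

theorem phiDual_id_eq_coe {w α : Fin p → ℝ} {ξ : Fin m → ℝ} (hξ : Fstar F₀ ξ ≠ ⊤) :
    phiDual id F₀ w α ξ = (dualObj F₀ w (ξ, α) : EReal) := by
  rw [phiDual, ← EReal.coe_toReal hξ (Fstar_ne_bot F₀ ξ), ← EReal.coe_sub]
  rfl

theorem phiDual_eq_bot {d : ℕ} {g : Fin p → Fin d} {v : Fin d → ℝ} {α : Fin p → ℝ}
    {ξ : Fin m → ℝ} (hξ : Fstar F₀ ξ = ⊤) : phiDual g F₀ v α ξ = ⊥ := by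
  rw [phiDual, hξ]
  rfl

theorem fZero_eq_of_isMaxOn {w : Fin p → ℝ} {y : (Fin m → ℝ) × (Fin p → ℝ)}
    (hy : y ∈ dualDom A L F₀) (hmax : IsMaxOn (dualObj F₀ w) (dualDom A L F₀) y) :
    fZero A L id F₀ w = dualObj F₀ w y := by
  rw [fZero, IsGreatest.csSup_eq, EReal.toReal_coe]
  refine ⟨⟨y.1, y.2, hy.1, (phiDual_id_eq_coe hy.2).symm⟩, ?_⟩
  rintro c ⟨ξ, α, hfeas, rfl⟩
  by_cases hξ : Fstar F₀ ξ = ⊤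
  · rw [phiDual_eq_bot hξ]
    exact bot_le
  · rw [phiDual_id_eq_coe hξ]
    exact EReal.coe_le_coe_iff.2 (hmax ⟨hfeas, hξ⟩)

theorem fZero_eq_zero_of_dualDom_eq_empty (h : dualDom A L F₀ = ∅) (w : Fin p → ℝ) :
    fZero A L id F₀ w = 0 := by
  rw [fZero, sSup_eq_bot.2, EReal.toReal_bot]
  rintro c ⟨ξ, α, hfeas, rfl⟩
  refine phiDual_eq_bot (by_contra fun hξ => ?_)
  exact (Set.eq_empty_iff_forall_notMem.1 h (ξ, α)) ⟨hfeas, hξ⟩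

theorem isClosed_dualObj_superlevel (w : Fin p → ℝ) (t : ℝ) :
    IsClosed {y ∈ dualDom A L F₀ | t ≤ dualObj F₀ w y} := by
  have heq : {y ∈ dualDom A L F₀ | t ≤ dualObj F₀ w y} = {y | Lᵀ *ᵥ y.2 = -(Aᵀ *ᵥ y.1)} ∩
      ⋂ z, {y | y.1 ⬝ᵥ z - F₀ z ≤ quadTerm w y.2 - t} := by
    ext y
    simp only [dualDom, dualObj, Set.mem_ofPred_eq, Set.mem_inter_iff, Set.mem_iInter]
    constructor
    · rintro ⟨⟨hfeas, hξ⟩, ht⟩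
      exact ⟨hfeas, fun z => by linarith [le_toReal_Fstar hξ z]⟩
    · rintro ⟨hfeas, hz⟩
      have hle := (Fstar_le_coe_iff F₀).2 hz
      refine ⟨⟨hfeas, ne_top_of_le_ne_top (EReal.coe_ne_top _) hle⟩, ?_⟩
      linarith [toReal_Fstar_le hle]
  have hq : Continuous fun y : (Fin m → ℝ) × (Fin p → ℝ) => quadTerm w y.2 :=
    contDiff_quadTerm.continuous.comp (continuous_const.prodMk continuous_snd)
  rw [heq]
  exact (isClosed_eq (by fun_prop) (by fun_prop)).inter
    (isClosed_iInter fun z => isClosed_le (by fun_prop) (by fun_prop))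

theorem isCompact_dualObj_superlevel {w : Fin p → ℝ} (hw : ∀ i, w i ≠ 0) (t : ℝ) :
    IsCompact {y ∈ dualDom A L F₀ | t ≤ dualObj F₀ w y} := by
  set a : Fin m → ℝ := fun i => -t + max (F₀ (Pi.single i 1)) (F₀ (Pi.single i (-1)))
  set b : Fin p → ℝ := fun i => √(2 * (F₀ 0 - t)) / |w i|
  refine ((isCompact_univ_pi fun i => isCompact_Icc (a := -a i) (b := a i)).prod
    (isCompact_univ_pi fun i => isCompact_Icc (a := -b i) (b := b i))).of_isClosed_subset
    (isClosed_dualObj_superlevel w t) ?_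
  rintro y ⟨⟨-, hξ⟩, ht⟩
  unfold dualObj at ht
  have hFs : (Fstar F₀ y.1).toReal ≤ -t := by linarith [quadTerm_nonpos w y.2]
  have hF0 := neg_le_toReal_Fstar hξ
  refine ⟨fun i _ => abs_le.1 ?_, fun i _ => abs_le.1 ?_⟩
  · exact le_add_of_le_add_right (abs_le_toReal_Fstar_add hξ i) hFs
  · rw [le_div_iff₀ (abs_pos.2 (hw i)), mul_comm, ← abs_mul]
    exact Real.abs_le_sqrt (by linarith [sq_le_neg_two_mul_quadTerm w y.2 i])

theorem exists_isMaxOn_dualObj {w : Fin p → ℝ} (hw : ∀ i, w i ≠ 0)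
    (hne : (dualDom A L F₀).Nonempty) :
    ∃ y ∈ dualDom A L F₀, IsMaxOn (dualObj F₀ w) (dualDom A L F₀) y :=
  exists_isMaxOn_of_isCompact_superlevel hne (isCompact_dualObj_superlevel hw)

theorem half_smul_add_mem_dualDom {y y' : (Fin m → ℝ) × (Fin p → ℝ)}
    (hy : y ∈ dualDom A L F₀) (hy' : y' ∈ dualDom A L F₀) :
    (1/2 : ℝ) • (y + y') ∈ dualDom A L F₀ := by
  refine ⟨?_, ?_⟩
  · simp only [Prod.smul_snd, Prod.snd_add, Prod.smul_fst, Prod.fst_add, Matrix.mulVec_smul,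
      Matrix.mulVec_add, hy.1, hy'.1]
    rw [← neg_add, smul_neg]
  · rw [Prod.smul_fst, Prod.fst_add, smul_add]
    exact ne_top_of_le_ne_top (EReal.coe_ne_top _)
      (Fstar_smul_add_smul_le hy.2 hy'.2 (by norm_num) (by norm_num) (by norm_num))

theorem le_dualObj_half_smul_add (w : Fin p → ℝ) {y y' : (Fin m → ℝ) × (Fin p → ℝ)}
    (hy : y ∈ dualDom A L F₀) (hy' : y' ∈ dualDom A L F₀) :
    dualObj F₀ w y / 2 + dualObj F₀ w y' / 2 - quadTerm w (y.2 - y'.2) / 4 ≤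
      dualObj F₀ w ((1/2 : ℝ) • (y + y')) := by
  have hle := Fstar_smul_add_smul_le hy.2 hy'.2 (le_of_lt one_half_pos) (le_of_lt one_half_pos)
    (add_halves 1)
  have hFs := toReal_Fstar_le hle
  rw [← smul_add] at hFs
  have hq := quadTerm_half_smul_add w y.2 y'.2
  unfold dualObj
  change _ ≤ quadTerm w ((1/2 : ℝ) • (y.2 + y'.2)) - (Fstar F₀ ((1/2 : ℝ) • (y.1 + y'.1))).toReal
  linarith

theorem IsMaxOn.dualObj_sub_quadTerm_le {w : Fin p → ℝ} {y y' : (Fin m → ℝ) × (Fin p → ℝ)}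
    (hy' : y' ∈ dualDom A L F₀) (hmax : IsMaxOn (dualObj F₀ w) (dualDom A L F₀) y')
    (hy : y ∈ dualDom A L F₀) :
    dualObj F₀ w y - quadTerm w (y.2 - y'.2) / 2 ≤ dualObj F₀ w y' := by
  have hmid : dualObj F₀ w ((1/2 : ℝ) • (y + y')) ≤ dualObj F₀ w y' :=
    hmax (half_smul_add_mem_dualDom hy hy')
  have := le_dualObj_half_smul_add w hy hy'
  linarith

theorem dualObj_sub_dualObj (u w : Fin p → ℝ) (y : (Fin m → ℝ) × (Fin p → ℝ)) :
    dualObj F₀ u y - dualObj F₀ w y = quadTerm u y.2 - quadTerm w y.2 := by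
  unfold dualObj
  ring

theorem neg_quadTerm_sub_le_of_isMaxOn {u w : Fin p → ℝ} {r : ℝ}
    {y y' : (Fin m → ℝ) × (Fin p → ℝ)}
    (hy' : y' ∈ dualDom A L F₀) (hmax' : IsMaxOn (dualObj F₀ w) (dualDom A L F₀) y')
    (hy : y ∈ dualDom A L F₀) (hmax : IsMaxOn (dualObj F₀ u) (dualDom A L F₀) y)
    (hr : ∀ α, |quadTerm u α - quadTerm w α| ≤ r * -quadTerm w α) (hr₀ : 0 ≤ r)
    (hr₁ : r ≤ 1/2) :
    -quadTerm w (y.2 - y'.2) ≤ 4 * r * (F₀ 0 - dualObj F₀ w y' - quadTerm w y'.2) := by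
  have hgrowth := hmax'.dualObj_sub_quadTerm_le hy' hy
  have hle : dualObj F₀ u y' ≤ dualObj F₀ u y := hmax hy'
  have hy'u := (abs_le.1 (hr y'.2)).1
  have hyu := (abs_le.1 (hr y.2)).2
  rw [← dualObj_sub_dualObj] at hy'u hyu
  have hF0 := neg_le_toReal_Fstar hy.2
  have hX := quadTerm_nonpos w y.2
  have hQ := quadTerm_nonpos w y'.2
  have hXbound : -quadTerm w y.2 ≤ 2 * (F₀ 0 - dualObj F₀ w y') - quadTerm w y'.2 := by
    unfold dualObj at hyu hy'u hle ⊢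
    nlinarith [mul_le_mul_of_nonneg_right hr₁ (neg_nonneg.2 hX),
      mul_le_mul_of_nonneg_right hr₁ (neg_nonneg.2 hQ)]
  nlinarith [mul_le_mul_of_nonneg_left hXbound hr₀]

theorem tendsto_zero_of_tendsto_neg_quadTerm {ι : Type*} {l : Filter ι} {w : Fin p → ℝ}
    (hw : ∀ i, w i ≠ 0) {β : ι → Fin p → ℝ}
    (h : Tendsto (fun x => -quadTerm w (β x)) l (𝓝 0)) : Tendsto β l (𝓝 0) := by
  refine tendsto_pi_nhds.2 fun i => squeeze_zero_norm
    (a := fun x => √(2 * -quadTerm w (β x)) / |w i|) (fun x => ?_) ?_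
  · rw [Real.norm_eq_abs, le_div_iff₀ (abs_pos.2 (hw i)), mul_comm, ← abs_mul]
    exact Real.abs_le_sqrt (by linarith [sq_le_neg_two_mul_quadTerm w (β x) i])
  · simpa using (h.const_mul 2).sqrt.div_const |w i|

theorem continuousAt_snd_of_isMaxOn {w : Fin p → ℝ} (hw : ∀ i, w i ≠ 0)
    {y : (Fin p → ℝ) → (Fin m → ℝ) × (Fin p → ℝ)}
    (hy : ∀ᶠ u in 𝓝 w, y u ∈ dualDom A L F₀ ∧ IsMaxOn (dualObj F₀ u) (dualDom A L F₀) (y u)) :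
    ContinuousAt (fun u => (y u).2) w := by
  obtain ⟨hyw, hmaxw⟩ := hy.self_of_nhds
  set r : (Fin p → ℝ) → ℝ := fun u => ∑ i, |u i ^ 2 / w i ^ 2 - 1|
  have hr : Tendsto r (𝓝 w) (𝓝 0) := by
    have hcont : Continuous r := by fun_prop
    simpa [r, hw] using hcont.tendsto w
  set K := F₀ 0 - dualObj F₀ w (y w) - quadTerm w (y w).2
  have hK : Tendsto (fun u => 4 * r u * K) (𝓝 w) (𝓝 0) := by
    simpa using (hr.const_mul 4).mul_const K
  refine tendsto_sub_nhds_zero_iff.1 (tendsto_zero_of_tendsto_neg_quadTerm hw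
    (squeeze_zero' (.of_forall fun u => neg_nonneg.2 (quadTerm_nonpos _ _)) ?_ hK))
  filter_upwards [hy, hr.eventually (eventually_le_nhds one_half_pos)] with u ⟨hyu, hmaxu⟩ hru
  exact neg_quadTerm_sub_le_of_isMaxOn hyw hmaxw hyu hmaxu (abs_quadTerm_sub_le hw u)
    (by positivity) hru

end DualProblem

theorem exists_hasStrictFDerivAt_fZero_id {n m p : ℕ} (A : Matrix (Fin m) (Fin n) ℝ)
    (L : Matrix (Fin p) (Fin n) ℝ) (F₀ : (Fin m → ℝ) → ℝ) {w : Fin p → ℝ}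
    (hw : ∀ i, w i ≠ 0) :
    ∃ D : (Fin p → ℝ) →L[ℝ] ℝ, HasStrictFDerivAt (fZero A L id F₀) D w := by
  rcases (dualDom A L F₀).eq_empty_or_nonempty with hempty | hne
  · refine ⟨0, ?_⟩
    rw [funext (fZero_eq_zero_of_dualDom_eq_empty hempty)]
    exact hasStrictFDerivAt_const 0 w
  set s : Set (Fin p → ℝ) := {u | ∀ i, u i ≠ 0}
  have hs : s ∈ 𝓝 w := by
    refine IsOpen.mem_nhds ?_ hw
    simpa only [s, Set.ofPred_forall] using
      isOpen_iInter_of_finite fun i => isOpen_ne_fun (continuous_apply i) continuous_const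
  choose! y hyDom hymax using fun u (hu : u ∈ s) => exists_isMaxOn_dualObj (A := A) (L := L) hu hne
  have hcont := continuousAt_snd_of_isMaxOn hw
    (Filter.mem_of_superset hs fun u hu => ⟨hyDom u hu, hymax u hu⟩)
  obtain ⟨Q', hQ⟩ : ∃ Q', HasStrictFDerivAt (fun x : (Fin p → ℝ) × (Fin p → ℝ) => quadTerm x.1 x.2)
      Q' (w, (y w).2) :=
    ⟨_, contDiff_quadTerm.contDiffAt.hasStrictFDerivAt WithTop.top_ne_zero⟩
  refine ⟨Q'.comp (.inl ℝ _ _), hasStrictFDerivAt_of_forall_le_of_eq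
    (φ := fun w' u => dualObj F₀ u (y w')) hs
    (fun w' hw' u hu => ?_) (fun u hu => (fZero_eq_of_isMaxOn (hyDom u hu) (hymax u hu)).symm)
    ((hQ.isLittleO_sub_of_continuousAt hcont).congr_left fun x => ?_)⟩
  · rw [fZero_eq_of_isMaxOn (hyDom u hu) (hymax u hu)]
    exact hymax u hu (hyDom w' hw')
  · rw [dualObj_sub_dualObj]

theorem statement5_general {n m p d : ℕ}
    (A : Matrix (Fin m) (Fin n) ℝ) (L : Matrix (Fin p) (Fin n) ℝ)
    (g : Fin p → Fin d)
    (F₀ : (Fin m → ℝ) → ℝ)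
    (v : Fin d → ℝ) (hv : ∀ j, v j ≠ 0) :
    ∃ D : (Fin d → ℝ) →L[ℝ] ℝ, HasStrictFDerivAt (fZero A L g F₀) D v := by
  obtain ⟨D, hD⟩ := exists_hasStrictFDerivAt_fZero_id A L F₀ (w := v ∘ g) fun i => hv (g i)
  let P : (Fin d → ℝ) →L[ℝ] Fin p → ℝ := .pi fun i => .proj (g i)
  have hfZero : fZero A L g F₀ = fZero A L id F₀ ∘ P := rfl
  exact ⟨D.comp P, hfZero ▸ hD.comp v P.hasStrictFDerivAt⟩

/-- Strict differentiability away from zero coordinates.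
If `F₀ : ℝ^m → ℝ` is convex with Lipschitz-continuous gradient and
`v_g ≠ 0` for every group `g`, then `f₀` is strictly differentiable at `v`. -/
theorem statement5 {n m p d : ℕ}
    (A : Matrix (Fin m) (Fin n) ℝ) (L : Matrix (Fin p) (Fin n) ℝ)
    (g : Fin p → Fin d) (hg : Function.Surjective g)
    (F₀ : (Fin m → ℝ) → ℝ)
    (hconv : ConvexOn ℝ Set.univ F₀)
    (hdiff : Differentiable ℝ F₀)
    (M : NNReal) (hlip : LipschitzWith M (fderiv ℝ F₀))
    (v : Fin d → ℝ) (hv : ∀ j, v j ≠ 0) :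
    ∃ D : (Fin d → ℝ) →L[ℝ] ℝ, HasStrictFDerivAt (fZero A L g F₀) D v :=
  statement5_general A L g F₀ v hv
end

section
/- Differentiability for basis pursuit: let F₀ = ι_{{y}} be the indicator of the single point y ∈ ℝ^m, and suppose y = Ax for some x ∈ ℝ^n. If v ∈ ℝ^{|Γ|} is such that the group support of v contains the group support of Ax (interpreted through the constraint Lx), then: v lies in the domain of f, a maximiser of sup_{α,ξ} φ(v,α,ξ) exists, where φ(v,ξ,α) = −½‖v⊙α‖² − ⟨ξ,y⟩ over the constraint L^⊤α = −A^⊤ξ, and f is differentiable at v. -/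
/-!
Since `⟨ξ, A x₀⟩ = -⟨α, L x₀⟩` whenever `Lᵀα = -Aᵀξ`, the dual objective depends only on `α`,
which ranges over a subspace `K`: it is `Q_w(α) = ⟨α, b⟩ - ½‖w ⊙ α‖²` with `b = L x₀` and
`w = v ∘ g`. The support hypothesis writes `b = w ⊙ u`, so `Q_w(α) = ½‖u‖² - ½‖w ⊙ α - u‖²`
is maximised at any `a ∈ K` solving the normal equations of this least-squares problem.
For `v'` near `v` (close enough that no nonzero coordinate of `v` vanishes) the normal
equations and completing the square give `0 ≤ sup_K Q_{v'∘g} - Q_{v'∘g}(a) ≤ C ‖v' - v‖²`,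
so `f` differs from the polynomial `v' ↦ ½‖v'‖² + Q_{v'∘g}(a)` by `O(‖v' - v‖²)`.
-/

open Matrix Filter Topology Asymptotics

lemma perturbation_term_le {w w' : ℝ} (hw : w = 0 ∨ 2 * |w' - w| ≤ |w|) (a h : ℝ) :
    (w ^ 2 - w' ^ 2) * a * h - (w' * h) ^ 2 / 2 ≤ 18 * a ^ 2 * (w' - w) ^ 2 := by
  rcases hw with rfl | hnear
  · nlinarith [mul_nonneg (sq_nonneg w') (sq_nonneg (a + h)), sq_nonneg a, sq_nonneg w']
  have hw' : w ^ 2 ≤ 4 * w' ^ 2 := by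
    have := abs_sub_abs_le_abs_sub w w'
    rw [abs_sub_comm] at this
    nlinarith [sq_abs w, sq_abs w', abs_nonneg w, abs_nonneg (w' - w)]
  have hsum : (w + w') ^ 2 ≤ 9 * w ^ 2 := by
    have : |w + w'| ≤ 3 * |w| := calc
      |w + w'| = |2 * w + (w' - w)| := by ring_nf
      _ ≤ |2 * w| + |w' - w| := abs_add_le _ _
      _ ≤ 3 * |w| := by rw [abs_mul, abs_two]; linarith [abs_nonneg w, abs_nonneg (w' - w)]
    nlinarith [sq_abs w, sq_abs (w + w'), abs_nonneg (w + w')]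
  rcases eq_or_ne w' 0 with rfl | hw'0
  · have : w = 0 := by nlinarith [sq_nonneg w]
    subst this
    norm_num
  set x := (w ^ 2 - w' ^ 2) * a
  set R := 18 * a ^ 2 * (w' - w) ^ 2
  -- completing the square in `h`
  have hsquare : 2 * w' ^ 2 * (x * h - (w' * h) ^ 2 / 2) ≤ x ^ 2 := by
    nlinarith [sq_nonneg (x - w' ^ 2 * h)]
  have hx : x ^ 2 ≤ 2 * w' ^ 2 * R := calc
    x ^ 2 = (w + w') ^ 2 * (a ^ 2 * (w' - w) ^ 2) := by ring
    _ ≤ 9 * w ^ 2 * (a ^ 2 * (w' - w) ^ 2) := by gcongr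
    _ ≤ 9 * (4 * w' ^ 2) * (a ^ 2 * (w' - w) ^ 2) := by gcongr
    _ = 2 * w' ^ 2 * R := by ring
  exact le_of_mul_le_mul_left (hsquare.trans hx) (by positivity)

section ReducedDual

variable {ι : Type*} [Fintype ι]

/-- The dual objective `φ(v, ξ, α)` on the feasible set, once `⟨ξ, y⟩ = -⟨α, b⟩` with
`b = L x₀` is substituted; `w` stands for `v ⊙ ·`, expanded to the coordinates of `α`. -/
noncomputable def reducedDual (b w α : ι → ℝ) : ℝ := ∑ i, (α i * b i - (w i * α i) ^ 2 / 2)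

lemma reducedDual_add (b w w' a h : ι → ℝ) :
    reducedDual b w' (a + h) = reducedDual b w' a + ∑ i, h i * (b i - w i ^ 2 * a i)
      + ∑ i, ((w i ^ 2 - w' i ^ 2) * a i * h i - (w' i * h i) ^ 2 / 2) := by
  simp only [reducedDual, Pi.add_apply, ← Finset.sum_add_distrib]
  exact Finset.sum_congr rfl fun i _ => by ring

lemma exists_mem_forall_inner_sub_eq_zero {E F : Type*} [AddCommGroup E] [Module ℝ E]
    [NormedAddCommGroup F] [InnerProductSpace ℝ F] [FiniteDimensional ℝ F]
    (T : E →ₗ[ℝ] F) (K : Submodule ℝ E) (u : F) :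
    ∃ a ∈ K, ∀ h ∈ K, inner ℝ (T h) (u - T a) = 0 := by
  obtain ⟨a, ha, hTa⟩ := (K.map T).starProjection_apply_mem u
  refine ⟨a, ha, fun h hh => ?_⟩
  rw [hTa]
  exact (K.map T).sub_starProjection_mem_orthogonal u (T h) (Submodule.mem_map_of_mem hh)

/-- The normal equations of the least-squares problem `min_{α ∈ K} ‖w ⊙ α - u‖`, where
`w ⊙ u = b`. -/
lemma exists_mem_forall_sum_eq_zero (K : Submodule ℝ (ι → ℝ)) {b w : ι → ℝ}
    (hb : ∀ i, w i = 0 → b i = 0) :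
    ∃ a ∈ K, ∀ h ∈ K, ∑ i, h i * (b i - w i ^ 2 * a i) = 0 := by
  let T : (ι → ℝ) →ₗ[ℝ] EuclideanSpace ℝ ι :=
    (WithLp.linearEquiv 2 ℝ (ι → ℝ)).symm.toLinearMap ∘ₗ LinearMap.pi fun i =>
      w i • LinearMap.proj i
  obtain ⟨a, ha, horth⟩ :=
    exists_mem_forall_inner_sub_eq_zero T K (WithLp.toLp 2 fun i => b i / w i)
  refine ⟨a, ha, fun h hh => ?_⟩
  rw [← horth h hh, PiLp.inner_apply]
  refine Finset.sum_congr rfl fun i _ => ?_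
  rcases eq_or_ne (w i) 0 with hw | hw
  · simp [T, hw, hb i hw]
  · simp [T]
    field_simp

lemma isGreatest_reducedDual_image {K : Submodule ℝ (ι → ℝ)} {b w a : ι → ℝ} (ha : a ∈ K)
    (horth : ∀ h ∈ K, ∑ i, h i * (b i - w i ^ 2 * a i) = 0) :
    IsGreatest (reducedDual b w '' K) (reducedDual b w a) := by
  refine ⟨⟨a, ha, rfl⟩, ?_⟩
  rintro _ ⟨α, hα, rfl⟩
  have := reducedDual_add b w w a (α - a)
  rw [add_sub_cancel, horth _ (K.sub_mem hα ha), add_zero] at this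
  rw [this, add_le_iff_nonpos_right]
  exact Finset.sum_nonpos fun i _ => by nlinarith [sq_nonneg (w i * (α - a) i)]


lemma reducedDual_le_of_near {K : Submodule ℝ (ι → ℝ)} {b w w' a α : ι → ℝ} (ha : a ∈ K)
    (horth : ∀ h ∈ K, ∑ i, h i * (b i - w i ^ 2 * a i) = 0)
    (hnear : ∀ i, w i = 0 ∨ 2 * |w' i - w i| ≤ |w i|) (hα : α ∈ K) :
    reducedDual b w' α ≤ reducedDual b w' a + 18 * ∑ i, a i ^ 2 * (w' i - w i) ^ 2 := by
  have := reducedDual_add b w w' a (α - a)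
  rw [add_sub_cancel, horth _ (K.sub_mem hα ha), add_zero] at this
  rw [this, Finset.mul_sum]
  gcongr with i
  linarith [perturbation_term_le (hnear i) (a i) ((α - a) i)]

lemma sSup_reducedDual_image_mem_Icc {K : Submodule ℝ (ι → ℝ)} {b w w' a : ι → ℝ}
    (ha : a ∈ K) (horth : ∀ h ∈ K, ∑ i, h i * (b i - w i ^ 2 * a i) = 0)
    (hnear : ∀ i, w i = 0 ∨ 2 * |w' i - w i| ≤ |w i|) :
    sSup (reducedDual b w' '' K) ∈ Set.Icc (reducedDual b w' a)
      (reducedDual b w' a + 18 * ∑ i, a i ^ 2 * (w' i - w i) ^ 2) := by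
  have hbound : ∀ c ∈ reducedDual b w' '' K,
      c ≤ reducedDual b w' a + 18 * ∑ i, a i ^ 2 * (w' i - w i) ^ 2 := by
    rintro _ ⟨α, hα, rfl⟩
    exact reducedDual_le_of_near ha horth hnear hα
  exact ⟨le_csSup ⟨_, hbound⟩ ⟨a, ha, rfl⟩, csSup_le ⟨_, a, ha, rfl⟩ hbound⟩

end ReducedDual

lemma eventually_forall_eq_zero_or_two_mul_abs_sub_le {κ : Type*} [Fintype κ] (v : κ → ℝ) :
    ∀ᶠ v' in 𝓝 v, ∀ j, v j = 0 ∨ 2 * |v' j - v j| ≤ |v j| := by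
  refine eventually_all.2 fun j => ?_
  rcases eq_or_ne (v j) 0 with h | h
  · exact Eventually.of_forall fun _ => Or.inl h
  · filter_upwards [(continuous_apply j).continuousAt.eventually
      (Metric.closedBall_mem_nhds (v j) (half_pos (abs_pos.2 h)))] with v' hv'
    rw [Real.dist_eq] at hv'
    exact Or.inr (by linarith)

lemma isBigO_sSup_reducedDual_image_sub {ι κ : Type*} [Fintype ι] [Fintype κ] (g : ι → κ)
    {K : Submodule ℝ (ι → ℝ)} {b a : ι → ℝ} {v : κ → ℝ} (ha : a ∈ K)
    (horth : ∀ h ∈ K, ∑ i, h i * (b i - v (g i) ^ 2 * a i) = 0) :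
    (fun v' : κ → ℝ => sSup (reducedDual b (fun i => v' (g i)) '' K)
        - reducedDual b (fun i => v' (g i)) a) =O[𝓝 v] fun v' => ‖v' - v‖ ^ 2 := by
  refine IsBigO.of_bound (18 * ∑ i, a i ^ 2) ?_
  filter_upwards [eventually_forall_eq_zero_or_two_mul_abs_sub_le v] with v' hnear
  obtain ⟨hlow, hupp⟩ :=
    sSup_reducedDual_image_mem_Icc (w' := fun i => v' (g i)) ha horth fun i => hnear (g i)
  have hcoord : ∀ i, (v' (g i) - v (g i)) ^ 2 ≤ ‖v' - v‖ ^ 2 := fun i => by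
    simpa [Real.norm_eq_abs, sq_abs] using
      pow_le_pow_left₀ (norm_nonneg _) (norm_le_pi_norm (v' - v) (g i)) 2
  rw [Real.norm_eq_abs, abs_of_nonneg (sub_nonneg.2 hlow), norm_pow, norm_norm,
    mul_assoc, Finset.sum_mul]
  have : ∑ i, a i ^ 2 * (v' (g i) - v (g i)) ^ 2 ≤ ∑ i, a i ^ 2 * ‖v' - v‖ ^ 2 := by
    exact Finset.sum_le_sum fun i _ => mul_le_mul_of_nonneg_left (hcoord i) (sq_nonneg _)
  linarith

section Duality

variable {m n p : Type*} [Fintype m] [Fintype p]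

def dualFeasible (A : Matrix m n ℝ) (L : Matrix p n ℝ) : Submodule ℝ (p → ℝ) :=
  (LinearMap.range Aᵀ.mulVecLin).comap Lᵀ.mulVecLin

lemma mem_dualFeasible {A : Matrix m n ℝ} {L : Matrix p n ℝ} {α : p → ℝ} :
    α ∈ dualFeasible A L ↔ ∃ ξ, Lᵀ *ᵥ α = -(Aᵀ *ᵥ ξ) := by
  simp only [dualFeasible, Submodule.mem_comap, LinearMap.mem_range, mulVecLin_apply]
  refine ⟨fun ⟨ξ, hξ⟩ => ⟨-ξ, by rw [← hξ, mulVec_neg, neg_neg]⟩,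
    fun ⟨ξ, hξ⟩ => ⟨-ξ, by rw [hξ, mulVec_neg]⟩⟩

lemma dotProduct_mulVec_eq_neg [Fintype n] {A : Matrix m n ℝ} {L : Matrix p n ℝ} {ξ : m → ℝ} {α : p → ℝ}
    (h : Lᵀ *ᵥ α = -(Aᵀ *ᵥ ξ)) (x : n → ℝ) : ξ ⬝ᵥ (A *ᵥ x) = -(α ⬝ᵥ (L *ᵥ x)) := by
  rw [dotProduct_mulVec, dotProduct_mulVec, ← mulVec_transpose, ← mulVec_transpose, h,
    neg_dotProduct, neg_neg]

lemma dualValues_eq_image [Fintype n] (A : Matrix m n ℝ) (L : Matrix p n ℝ) (x : n → ℝ) (w : p → ℝ) :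
    {c : ℝ | ∃ (ξ : m → ℝ) (α : p → ℝ), Lᵀ *ᵥ α = -(Aᵀ *ᵥ ξ) ∧
      c = (-(1/2)) * (∑ i, (w i * α i) ^ 2) - ∑ i, ξ i * (A *ᵥ x) i}
      = reducedDual (L *ᵥ x) w '' dualFeasible A L := by
  have hvalue : ∀ (ξ : m → ℝ) (α : p → ℝ), Lᵀ *ᵥ α = -(Aᵀ *ᵥ ξ) →
      (-(1/2)) * (∑ i, (w i * α i) ^ 2) - ∑ i, ξ i * (A *ᵥ x) i = reducedDual (L *ᵥ x) w α := by
    intro ξ α h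
    have := dotProduct_mulVec_eq_neg h x
    simp only [dotProduct] at this
    simp only [reducedDual, Finset.sum_sub_distrib, this, ← Finset.sum_div]
    ring
  ext c
  constructor
  · rintro ⟨ξ, α, h, rfl⟩
    exact ⟨α, mem_dualFeasible.2 ⟨ξ, h⟩, (hvalue ξ α h).symm⟩
  · rintro ⟨α, hα, rfl⟩
    obtain ⟨ξ, h⟩ := mem_dualFeasible.1 hα
    exact ⟨ξ, α, h, (hvalue ξ α h).symm⟩

end Duality

theorem statement8_general {n m p d : ℕ}
    (A : Matrix (Fin m) (Fin n) ℝ) (L : Matrix (Fin p) (Fin n) ℝ)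
    (g : Fin p → Fin d)
    (y : Fin m → ℝ) (x₀ : Fin n → ℝ) (hy : y = A.mulVec x₀)
    (v : Fin d → ℝ)
    (hsupp : ∀ j : Fin d, (∃ i : Fin p, g i = j ∧ L.mulVec x₀ i ≠ 0) → v j ≠ 0) :
    (Set.Nonempty { c : ℝ | ∃ (ξ : Fin m → ℝ) (α : Fin p → ℝ),
        Lᵀ.mulVec α = -(Aᵀ.mulVec ξ) ∧
        c = (-(1/2)) * (∑ i, (v (g i) * α i)^2) - ∑ i, ξ i * y i } ∧
     BddAbove { c : ℝ | ∃ (ξ : Fin m → ℝ) (α : Fin p → ℝ),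
        Lᵀ.mulVec α = -(Aᵀ.mulVec ξ) ∧
        c = (-(1/2)) * (∑ i, (v (g i) * α i)^2) - ∑ i, ξ i * y i })
    ∧
    (∃ c : ℝ, IsGreatest { c' : ℝ | ∃ (ξ : Fin m → ℝ) (α : Fin p → ℝ),
        Lᵀ.mulVec α = -(Aᵀ.mulVec ξ) ∧
        c' = (-(1/2)) * (∑ i, (v (g i) * α i)^2) - ∑ i, ξ i * y i } c)
    ∧
    (∃ D : (Fin d → ℝ) →L[ℝ] ℝ,
      HasFDerivAt (fun v' : Fin d → ℝ =>
        (1/2) * (∑ j, (v' j)^2) +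
        sSup { c : ℝ | ∃ (ξ : Fin m → ℝ) (α : Fin p → ℝ),
          Lᵀ.mulVec α = -(Aᵀ.mulVec ξ) ∧
          c = (-(1/2)) * (∑ i, (v' (g i) * α i)^2) - ∑ i, ξ i * y i }) D v) := by
  subst hy
  simp_rw [dualValues_eq_image]
  obtain ⟨a, ha, horth⟩ := exists_mem_forall_sum_eq_zero (dualFeasible A L)
    (b := L *ᵥ x₀) (w := fun i => v (g i))
    fun i hvi => not_not.1 fun hbi => hsupp (g i) ⟨i, rfl, hbi⟩ hvi
  have hmax := isGreatest_reducedDual_image ha horth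
  refine ⟨⟨hmax.nonempty, hmax.bddAbove⟩, ⟨_, hmax⟩, ?_⟩
  have hsmooth : DifferentiableAt ℝ (fun v' : Fin d → ℝ =>
      1/2 * ∑ j, v' j ^ 2 + reducedDual (L *ᵥ x₀) (fun i => v' (g i)) a) v := by
    unfold reducedDual
    fun_prop
  have hgap := (isBigO_sSup_reducedDual_image_sub g ha horth).hasFDerivAt (𝕜 := ℝ) one_lt_two
  exact ⟨_, (hsmooth.hasFDerivAt.add hgap).congr_of_eventuallyEq
    (Eventually.of_forall fun v' => by simp only [Pi.add_apply]; ring)⟩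

/-- Differentiability for basis pursuit.  Here `F₀ = ι_{{y}}` with
`y = Ax₀`, and by duality `f(v) = ½‖v‖² + sup {φ(v,ξ,α) : L^⊤α = −A^⊤ξ}` with
`φ(v,ξ,α) = −½‖v⊙α‖² − ⟨ξ,y⟩`.  If the group support of `v` contains the group
support of the constraint vector `Lx₀` (i.e. `v_j ≠ 0` whenever some index `i`
of group `j` has `(Lx₀)_i ≠ 0`), then the dual value set is nonempty and bounded
above (so `v ∈ dom f`), a maximiser exists, and `f` is differentiable at `v`. -/
theorem statement8 {n m p d : ℕ}
    (A : Matrix (Fin m) (Fin n) ℝ) (L : Matrix (Fin p) (Fin n) ℝ)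
    (g : Fin p → Fin d) (hg : Function.Surjective g)
    (y : Fin m → ℝ) (x₀ : Fin n → ℝ) (hy : y = A.mulVec x₀)
    (v : Fin d → ℝ)
    (hsupp : ∀ j : Fin d, (∃ i : Fin p, g i = j ∧ L.mulVec x₀ i ≠ 0) → v j ≠ 0) :
    (Set.Nonempty { c : ℝ | ∃ (ξ : Fin m → ℝ) (α : Fin p → ℝ),
        Lᵀ.mulVec α = -(Aᵀ.mulVec ξ) ∧
        c = (-(1/2)) * (∑ i, (v (g i) * α i)^2) - ∑ i, ξ i * y i } ∧
     BddAbove { c : ℝ | ∃ (ξ : Fin m → ℝ) (α : Fin p → ℝ),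
        Lᵀ.mulVec α = -(Aᵀ.mulVec ξ) ∧
        c = (-(1/2)) * (∑ i, (v (g i) * α i)^2) - ∑ i, ξ i * y i })
    ∧
    (∃ c : ℝ, IsGreatest { c' : ℝ | ∃ (ξ : Fin m → ℝ) (α : Fin p → ℝ),
        Lᵀ.mulVec α = -(Aᵀ.mulVec ξ) ∧
        c' = (-(1/2)) * (∑ i, (v (g i) * α i)^2) - ∑ i, ξ i * y i } c)
    ∧
    (∃ D : (Fin d → ℝ) →L[ℝ] ℝ,
      HasFDerivAt (fun v' : Fin d → ℝ =>
        (1/2) * (∑ j, (v' j)^2) +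
        sSup { c : ℝ | ∃ (ξ : Fin m → ℝ) (α : Fin p → ℝ),
          Lᵀ.mulVec α = -(Aᵀ.mulVec ξ) ∧
          c = (-(1/2)) * (∑ i, (v' (g i) * α i)^2) - ∑ i, ξ i * y i }) D v) :=
  statement8_general A L g y x₀ hy v hsupp
end

section
/- Three-factor Hadamard parameterization of group ℓ_q: let q ∈ (0,1) and β > 0 satisfy β = q/(2 − 2q) (equivalently q = 2β/(1+2β)). Then for every x ∈ ℝ^p, (1/q)·Σ_{g∈Γ} ‖x_g‖^q = min over u ∈ ℝ^p and v, w ∈ ℝ^{|Γ|} with x = u⊙(v·w) of [ ½‖u‖₂² + ½‖v‖₂² + (1/(2β)) Σ_{g∈Γ} |w_g|^{2β} ], where v·w is the coordinatewise product in ℝ^{|Γ|}. -/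
/-!
If `x = u ⊙ (v·w)` then `‖x_g‖ = ‖u_g‖ |v_g| |w_g|` for every group. Weighted AM–GM with weights
`q/2, q/2, q/(2β)`, which sum to `1` exactly when `β = q/(2 - 2q)`, applied to
`‖u_g‖², v_g², |w_g|^{2β}` gives `‖x_g‖^q / q ≤ ½‖u_g‖² + ½v_g² + |w_g|^{2β}/(2β)`; summing over
the groups gives the lower bound. It is attained when the three terms are all equal to `‖x_g‖^q`,
i.e. for `v_g = ‖x_g‖^{q/2}`, `w_g = ‖x_g‖^{1-q}`, `u_g = x_g / ‖x_g‖^{1-q/2}`.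
-/

open Finset

lemma young_three_factor {q β : ℝ} (hq : 0 < q) (hβ : 0 < β) (hqβ : 2 * β * (1 - q) = q)
    {a b c : ℝ} (ha : 0 ≤ a) (hb : 0 ≤ b) (hc : 0 ≤ c) :
    1 / q * (a * b * c) ^ q ≤ 1 / 2 * a ^ 2 + 1 / 2 * b ^ 2 + 1 / (2 * β) * c ^ (2 * β) := by
  have hweights : q / 2 + q / 2 + q / (2 * β) = 1 := by
    field_simp; linarith
  have hsq : ∀ {t : ℝ}, 0 ≤ t → (t ^ 2) ^ (q / 2) = t ^ q := fun ht => by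
    rw [← Real.rpow_natCast_mul ht]; congr 1; push_cast; ring
  have hpow : (c ^ (2 * β)) ^ (q / (2 * β)) = c ^ q := by
    rw [← Real.rpow_mul hc]; field_simp
  have amgm := Real.geom_mean_le_arith_mean3_weighted (by positivity) (by positivity)
    (by positivity) (sq_nonneg a) (sq_nonneg b) (Real.rpow_nonneg hc (2 * β)) hweights
  rw [hsq ha, hsq hb, hpow, ← Real.mul_rpow (by positivity) hb,
    ← Real.mul_rpow (by positivity) hc] at amgm
  calc 1 / q * (a * b * c) ^ q
      ≤ 1 / q * (q / 2 * a ^ 2 + q / 2 * b ^ 2 + q / (2 * β) * c ^ (2 * β)) := by gcongr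
    _ = _ := by field_simp

lemma young_three_factor_eq {q β : ℝ} (hq : 0 < q) (hβ : 0 < β) (hqβ : 2 * β * (1 - q) = q)
    {n : ℝ} (hn : 0 ≤ n) :
    1 / 2 * (n ^ (q / 2)) ^ 2 + 1 / 2 * (n ^ (q / 2)) ^ 2
      + 1 / (2 * β) * |n ^ (1 - q)| ^ (2 * β) = 1 / q * n ^ q := by
  have hsq : (n ^ (q / 2)) ^ 2 = n ^ q := by
    rw [← Real.rpow_mul_natCast hn]; congr 1; push_cast; ring
  have hpow : |n ^ (1 - q)| ^ (2 * β) = n ^ q := by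
    rw [abs_of_nonneg (Real.rpow_nonneg hn _), ← Real.rpow_mul hn]; congr 1; linarith
  rw [hsq, hpow]
  field_simp
  linear_combination -n ^ q * hqβ

section GroupNorm

variable {ι κ : Type*} [Fintype ι] [DecidableEq κ]

noncomputable def groupNorm (g : ι → κ) (x : ι → ℝ) (j : κ) : ℝ :=
  Real.sqrt (∑ i, if g i = j then x i ^ 2 else 0)

lemma groupNorm_nonneg (g : ι → κ) (x : ι → ℝ) (j : κ) : 0 ≤ groupNorm g x j :=
  Real.sqrt_nonneg _

lemma groupNorm_sq (g : ι → κ) (x : ι → ℝ) (j : κ) :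
    groupNorm g x j ^ 2 = ∑ i, if g i = j then x i ^ 2 else 0 :=
  Real.sq_sqrt (sum_nonneg fun i _ => by split_ifs <;> positivity)

lemma sum_sq_eq_sum_groupNorm_sq [Fintype κ] (g : ι → κ) (x : ι → ℝ) :
    ∑ i, x i ^ 2 = ∑ j, groupNorm g x j ^ 2 := by
  simp_rw [groupNorm_sq, ← sum_filter]
  exact (sum_fiberwise univ g _).symm

lemma eq_zero_of_groupNorm_eq_zero {g : ι → κ} {x : ι → ℝ} {i : ι}
    (h : groupNorm g x (g i) = 0) : x i = 0 := by
  have hsum := groupNorm_sq g x (g i)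
  rw [h, zero_pow two_ne_zero, eq_comm,
    sum_eq_zero_iff_of_nonneg fun i _ => by split_ifs <;> positivity] at hsum
  simpa using hsum i (mem_univ i)

lemma groupNorm_of_factor {g : ι → κ} {x u : ι → ℝ} {v w : κ → ℝ}
    (hx : ∀ i, v (g i) * w (g i) * u i = x i) (j : κ) :
    groupNorm g x j = groupNorm g u j * |v j| * |w j| := by
  have hsq : (∑ i, if g i = j then x i ^ 2 else 0)
      = (∑ i, if g i = j then u i ^ 2 else 0) * (v j * w j) ^ 2 := by
    rw [sum_mul]
    refine sum_congr rfl fun i _ => ?_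
    split_ifs with hi
    · rw [← hx i, hi]; ring
    · rw [zero_mul]
  rw [groupNorm, groupNorm, hsq, Real.sqrt_mul' _ (sq_nonneg _), Real.sqrt_sq_eq_abs, abs_mul,
    mul_assoc]

lemma hadamardCost_eq_sum [Fintype κ] (g : ι → κ) (β : ℝ) (u : ι → ℝ) (v w : κ → ℝ) :
    1 / 2 * ∑ i, u i ^ 2 + 1 / 2 * ∑ j, v j ^ 2 + 1 / (2 * β) * ∑ j, |w j| ^ (2 * β)
      = ∑ j, (1 / 2 * groupNorm g u j ^ 2 + 1 / 2 * v j ^ 2 + 1 / (2 * β) * |w j| ^ (2 * β)) := by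
  rw [sum_sq_eq_sum_groupNorm_sq g, mul_sum, mul_sum, mul_sum, ← sum_add_distrib,
    ← sum_add_distrib]

/-- On a group with `‖x_g‖ = 0` the division is junk, but `x_g = 0` there. -/
noncomputable def hadamardU (q : ℝ) (g : ι → κ) (x : ι → ℝ) (i : ι) : ℝ :=
  x i / groupNorm g x (g i) ^ (1 - q / 2)

variable {q : ℝ}

lemma factor_hadamardU (g : ι → κ) (x : ι → ℝ) (i : ι) :
    groupNorm g x (g i) ^ (q / 2) * groupNorm g x (g i) ^ (1 - q) * hadamardU q g x i = x i := by
  rcases (groupNorm_nonneg g x (g i)).eq_or_lt with h0 | hpos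
  · simp [hadamardU, eq_zero_of_groupNorm_eq_zero h0.symm]
  · rw [hadamardU, ← Real.rpow_add hpos, show q / 2 + (1 - q) = 1 - q / 2 by ring,
      mul_div_cancel₀ _ (Real.rpow_pos_of_pos hpos _).ne']

lemma groupNorm_hadamardU (hq : q ≠ 0) (g : ι → κ) (x : ι → ℝ) (j : κ) :
    groupNorm g (hadamardU q g x) j = groupNorm g x j ^ (q / 2) := by
  have hscale := groupNorm_of_factor (g := g) (v := fun j => (groupNorm g x j ^ (1 - q / 2))⁻¹)
    (w := 1) (u := x) (x := hadamardU q g x) (fun i => by simp [hadamardU, div_eq_inv_mul]) j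
  rw [hscale, Pi.one_apply, abs_one, mul_one]
  rcases (groupNorm_nonneg g x j).eq_or_lt with h0 | hpos
  · rw [← h0, zero_mul, Real.zero_rpow (by simpa using hq)]
  · rw [abs_of_pos (by positivity), ← div_eq_mul_inv]
    conv_rhs => rw [show q / 2 = 1 - (1 - q / 2) by ring, Real.rpow_sub hpos, Real.rpow_one]

end GroupNorm

theorem statement18_general {p d : ℕ} (g : Fin p → Fin d)
    (q β : ℝ) (hq0 : 0 < q) (hq1 : q < 1) (hβ : β = q / (2 - 2*q))
    (x : Fin p → ℝ) :
    IsLeast { c : ℝ | ∃ (u : Fin p → ℝ) (v w : Fin d → ℝ),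
        (∀ i, v (g i) * w (g i) * u i = x i) ∧
        c = (1/2) * (∑ i, (u i)^2) + (1/2) * (∑ j, (v j)^2)
            + (1/(2*β)) * ∑ j, |w j| ^ (2*β) }
      ((1/q) * ∑ j, (Real.sqrt (∑ i, if g i = j then (x i)^2 else 0)) ^ q) := by
  have hβ0 : 0 < β := hβ ▸ div_pos hq0 (by linarith)
  have hqβ : 2 * β * (1 - q) = q := by
    rw [hβ, mul_div_assoc', div_mul_eq_mul_div, div_eq_iff (by linarith)]; ring
  change IsLeast _ (1 / q * ∑ j, groupNorm g x j ^ q)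
  refine ⟨⟨hadamardU q g x, fun j => groupNorm g x j ^ (q / 2),
    fun j => groupNorm g x j ^ (1 - q), factor_hadamardU g x, ?_⟩, ?_⟩
  · rw [hadamardCost_eq_sum g, mul_sum]
    refine sum_congr rfl fun j _ => ?_
    rw [groupNorm_hadamardU hq0.ne', young_three_factor_eq hq0 hβ0 hqβ (groupNorm_nonneg g x j)]
  · rintro c ⟨u, v, w, hx, rfl⟩
    rw [hadamardCost_eq_sum g, mul_sum]
    refine sum_le_sum fun j _ => ?_
    rw [groupNorm_of_factor hx j, ← sq_abs (v j)]
    exact young_three_factor hq0 hβ0 hqβ (groupNorm_nonneg g u j) (abs_nonneg _) (abs_nonneg _)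

/-- Three-factor Hadamard parameterization of group ℓ_q.
`q ∈ (0,1)`, `β = q/(2−2q)`; the partition is encoded by the surjective map
`g : Fin p → Fin d`.  Then `(1/q)Σ_g ‖x_g‖^q` is the attained minimum of
`½‖u‖² + ½‖v‖² + (1/2β)Σ_g |w_g|^{2β}` over factorizations `x = u⊙(v·w)`,
i.e. `x_i = v_{g i}·w_{g i}·u_i`. -/
theorem statement18 {p d : ℕ} (g : Fin p → Fin d) (hg : Function.Surjective g)
    (q β : ℝ) (hq0 : 0 < q) (hq1 : q < 1) (hβ : β = q / (2 - 2*q))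
    (x : Fin p → ℝ) :
    IsLeast { c : ℝ | ∃ (u : Fin p → ℝ) (v w : Fin d → ℝ),
        (∀ i, v (g i) * w (g i) * u i = x i) ∧
        c = (1/2) * (∑ i, (u i)^2) + (1/2) * (∑ j, (v j)^2)
            + (1/(2*β)) * ∑ j, |w j| ^ (2*β) }
      ((1/q) * ∑ j, (Real.sqrt (∑ i, if g i = j then (x i)^2 else 0)) ^ q) :=
  statement18_general g q β hq0 hq1 hβ x
end

section
/- Quadratic variational form of the nuclear norm: for every matrix X ∈ ℝ^{n₁×n₂}, the nuclear norm (sum of singular values) satisfies ‖X‖_* = min over U ∈ ℝ^{n₁×n₁}, V ∈ ℝ^{n₁×n₂} with X = UV of [ ½‖U‖_F² + ½‖V‖_F² ], and also ‖X‖_* = min over symmetric positive semidefinite Σ ∈ ℝ^{n₁×n₁} of [ ½⟨ΣX, X⟩_F + ½ tr(Σ⁻¹) ] (interpreted as the infimum over positive definite Σ, with ⟨·,·⟩_F the Frobenius inner product). -/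
open Matrix

/-- The nuclear norm of a real matrix: the sum of its singular values, i.e. of
the square roots of the eigenvalues of `Xᴴ X`. -/
noncomputable def nuclearNorm {n₁ n₂ : ℕ} (X : Matrix (Fin n₁) (Fin n₂) ℝ) : ℝ :=
  ∑ i, Real.sqrt ((isHermitian_conjTranspose_mul_self X).eigenvalues i)

/-!
Write `X = Q diag(σ) Bᴴ` with `B` orthogonal, `σ` the singular values and `Q` a partial
isometry. For any factorization `X = UV`,
`∑ σ = tr (Qᴴ U V B) = ⟨UᴴQ, VB⟩_F ≤ ½‖UᴴQ‖² + ½‖VB‖² ≤ ½‖U‖² + ½‖V‖²`,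
because `QQᴴ ≤ 1` and `B` is orthogonal; `U = Q diag(√σ) Qᴴ`, `V = Q diag(√σ) Bᴴ` attain it.
Factoring `X = R⁻¹ (R X)` for a positive definite `Σ = RᴴR` turns the second expression into
the first one, so it is bounded below by `∑ σ`; the choice `Σ = (UUᴴ + δ)⁻¹`, with `U` optimal,
comes within `n₁ δ / 2` of the bound, since `Uᴴ (UUᴴ + δ)⁻¹ U = 1 - δ (UᴴU + δ)⁻¹ ≤ 1`.
-/

namespace Matrix

variable {m n k : Type*} [Fintype m] [Fintype n] [Fintype k]

theorem sum_sum_mul_eq_trace_conjTranspose_mul (A B : Matrix m n ℝ) :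
    ∑ i, ∑ j, A i j * B i j = trace (Aᴴ * B) := by
  simp [trace, mul_apply, Finset.sum_comm (γ := n)]

theorem sum_sum_sq_eq_trace_conjTranspose_mul_self (A : Matrix m n ℝ) :
    ∑ i, ∑ j, A i j ^ 2 = trace (Aᴴ * A) := by
  simp only [sq, sum_sum_mul_eq_trace_conjTranspose_mul]

theorem two_mul_trace_conjTranspose_mul_le (A B : Matrix m n ℝ) :
    2 * trace (Aᴴ * B) ≤ trace (Aᴴ * A) + trace (Bᴴ * B) := by
  simp only [← sum_sum_sq_eq_trace_conjTranspose_mul_self,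
    ← sum_sum_mul_eq_trace_conjTranspose_mul, Finset.mul_sum, ← Finset.sum_add_distrib]
  gcongr with i _ j _
  linarith [two_mul_le_add_sq (A i j) (B i j)]

theorem mul_conjTranspose_mul_self_of_isIdempotentElem {Q : Matrix m n ℝ}
    (hQ : IsIdempotentElem (Qᴴ * Q)) : Q * (Qᴴ * Q) = Q := by
  rw [← sub_eq_zero, ← conjTranspose_mul_self_eq_zero]
  have h : (Q * (Qᴴ * Q) - Q)ᴴ * (Q * (Qᴴ * Q) - Q)
      = Qᴴ * Q * (Qᴴ * Q) * (Qᴴ * Q) - Qᴴ * Q * (Qᴴ * Q) - (Qᴴ * Q * (Qᴴ * Q) - Qᴴ * Q) := by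
    simp only [conjTranspose_sub, conjTranspose_mul, conjTranspose_conjTranspose, Matrix.sub_mul,
      Matrix.mul_sub, Matrix.mul_assoc]
  rw [h, hQ.eq, hQ.eq, sub_self]

theorem trace_conjTranspose_mul_mul_conjTranspose_mul_le [DecidableEq m] {Q : Matrix m n ℝ}
    (hQ : Q * (Qᴴ * Q) = Q) (U : Matrix m k ℝ) :
    trace (Uᴴ * (Q * Qᴴ) * U) ≤ trace (Uᴴ * U) := by
  set P : Matrix m m ℝ := 1 - Q * Qᴴ
  have hP : Pᴴ * P = P := by
    have hQQ : Q * Qᴴ * (Q * Qᴴ) = Q * Qᴴ := by rw [← Matrix.mul_assoc, Matrix.mul_assoc Q, hQ]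
    simp only [P, conjTranspose_sub, conjTranspose_one, conjTranspose_mul,
      conjTranspose_conjTranspose, Matrix.sub_mul, Matrix.mul_sub, Matrix.one_mul, Matrix.mul_one,
      hQQ, sub_self, sub_zero]
  have hPU := (posSemidef_conjTranspose_mul_self (P * U)).trace_nonneg
  rw [conjTranspose_mul, Matrix.mul_assoc, ← Matrix.mul_assoc Pᴴ, hP] at hPU
  simp only [P, Matrix.sub_mul, Matrix.mul_sub, trace_sub, Matrix.one_mul, Matrix.mul_assoc] at hPU
  simpa only [Matrix.mul_assoc, sub_nonneg] using hPU

theorem posDef_conjTranspose_mul_self_add_smul_one [DecidableEq n] (U : Matrix m n ℝ) {δ : ℝ}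
    (hδ : 0 < δ) : (Uᴴ * U + δ • 1).PosDef :=
  PosDef.posSemidef_add (posSemidef_conjTranspose_mul_self U) (PosDef.one.smul hδ)

theorem posDef_mul_conjTranspose_self_add_smul_one [DecidableEq m] (U : Matrix m n ℝ) {δ : ℝ}
    (hδ : 0 < δ) : (U * Uᴴ + δ • 1).PosDef := by
  simpa using posDef_conjTranspose_mul_self_add_smul_one Uᴴ hδ

theorem conjTranspose_mul_inv_add_smul_one_mul [DecidableEq m] [DecidableEq n]
    (U : Matrix m n ℝ) {δ : ℝ} (hδ : 0 < δ) :
    Uᴴ * (U * Uᴴ + δ • 1)⁻¹ * U = 1 - δ • (Uᴴ * U + δ • 1)⁻¹ := by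
  set A := U * Uᴴ + δ • 1
  set A' := Uᴴ * U + δ • 1
  have hA : IsUnit A.det :=
    (isUnit_iff_isUnit_det A).mp (posDef_mul_conjTranspose_self_add_smul_one U hδ).isUnit
  have hA' : IsUnit A'.det :=
    (isUnit_iff_isUnit_det A').mp (posDef_conjTranspose_mul_self_add_smul_one U hδ).isUnit
  have hcomm : A' * Uᴴ = Uᴴ * A := by
    simp only [A, A', Matrix.add_mul, Matrix.mul_add, Matrix.mul_assoc, Matrix.smul_mul,
      Matrix.mul_smul, Matrix.one_mul, Matrix.mul_one]
  have hpush : Uᴴ * A⁻¹ = A'⁻¹ * Uᴴ :=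
    calc Uᴴ * A⁻¹ = A'⁻¹ * (A' * Uᴴ) * A⁻¹ := by rw [nonsing_inv_mul_cancel_left _ _ hA']
      _ = A'⁻¹ * Uᴴ := by
        rw [hcomm, Matrix.mul_assoc, Matrix.mul_assoc, mul_nonsing_inv _ hA, Matrix.mul_one]
  have hUU : Uᴴ * U = A' - δ • 1 := by simp [A']
  rw [hpush, Matrix.mul_assoc, hUU, Matrix.mul_sub, nonsing_inv_mul _ hA', Matrix.mul_smul,
    Matrix.mul_one]

theorem trace_inv_add_smul_one_mul_le [DecidableEq m] [DecidableEq k] (U : Matrix m k ℝ)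
    (V : Matrix k n ℝ) {δ : ℝ} (hδ : 0 < δ) :
    trace (((U * Uᴴ + δ • 1)⁻¹ * (U * V))ᴴ * (U * V)) ≤ trace (Vᴴ * V) := by
  have hA := posDef_mul_conjTranspose_self_add_smul_one U hδ
  have hA' := (posDef_conjTranspose_mul_self_add_smul_one U hδ).inv.posSemidef
  have hconj : ((U * Uᴴ + δ • 1)⁻¹ * (U * V))ᴴ * (U * V)
      = Vᴴ * (Uᴴ * (U * Uᴴ + δ • 1)⁻¹ * U) * V := by
    rw [conjTranspose_mul, hA.inv.isHermitian.eq, conjTranspose_mul]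
    simp only [Matrix.mul_assoc]
  rw [hconj, conjTranspose_mul_inv_add_smul_one_mul U hδ, Matrix.mul_sub, Matrix.sub_mul,
    trace_sub, Matrix.mul_one, Matrix.mul_smul, Matrix.smul_mul, trace_smul, smul_eq_mul]
  exact sub_le_self _ (mul_nonneg hδ.le (hA'.conjTranspose_mul_mul_same V).trace_nonneg)

variable [DecidableEq n]

/-- A singular value decomposition in which `Q` has the shape of `X`: its columns are
orthonormal on the support of `σ` and vanish off it. -/
structure IsSVD (X Q : Matrix m n ℝ) (σ : n → ℝ) (B : Matrix n n ℝ) : Prop where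
  eq_mul : X = Q * diagonal σ * Bᴴ
  orthogonal : Bᴴ * B = 1
  nonneg : ∀ j, 0 ≤ σ j
  conjTranspose_mul_self : Qᴴ * Q = diagonal fun j => if σ j = 0 then 0 else 1

theorem exists_isSVD (X : Matrix m n ℝ) :
    ∃ Q B, IsSVD X Q (fun j => √((isHermitian_conjTranspose_mul_self X).eigenvalues j)) B := by
  set hXX := isHermitian_conjTranspose_mul_self X
  set σ : n → ℝ := fun j => √(hXX.eigenvalues j)
  set B : Matrix n n ℝ := (hXX.eigenvectorUnitary : Matrix n n ℝ)
  have hB : Bᴴ * B = 1 := (mem_unitaryGroup_iff' (A := B)).mp hXX.eigenvectorUnitary.2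
  have hσ : ∀ j, σ j * σ j = hXX.eigenvalues j := fun j =>
    Real.mul_self_sqrt ((posSemidef_conjTranspose_mul_self X).eigenvalues_nonneg j)
  have hdiag : (X * B)ᴴ * (X * B) = diagonal (σ * σ) := by
    have hspec := hXX.conjStarAlgAut_star_eigenvectorUnitary
    simp only [Unitary.conjStarAlgAut_star_apply, RCLike.ofReal_real_eq_id,
      Function.id_comp] at hspec
    rw [conjTranspose_mul, Matrix.mul_assoc, ← Matrix.mul_assoc Xᴴ, ← Matrix.mul_assoc,
      ← star_eq_conjTranspose, hspec]
    exact congrArg diagonal (funext fun j => (hσ j).symm)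
  -- the columns of `X * B` vanish where `σ` does
  have hXB : X * B * diagonal (fun j => (σ j)⁻¹ * σ j) = X * B := by
    have hsub : X * B * diagonal (fun j => (σ j)⁻¹ * σ j) - X * B
        = X * B * diagonal (fun j => (σ j)⁻¹ * σ j - 1) := by
      ext i j
      simp only [sub_apply, mul_diagonal]
      ring
    rw [← sub_eq_zero, hsub, ← conjTranspose_mul_self_eq_zero, conjTranspose_mul,
      diagonal_conjTranspose, Matrix.mul_assoc, ← Matrix.mul_assoc (X * B)ᴴ, hdiag]
    simp only [diagonal_mul_diagonal, diagonal_eq_zero]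
    funext j
    by_cases hj : σ j = 0 <;> simp [hj]
  -- `0⁻¹ = 0` makes the columns of `Q` vanish off the support of `σ`
  refine ⟨X * B * diagonal fun j => (σ j)⁻¹, B, ⟨?_, hB, fun j => Real.sqrt_nonneg _, ?_⟩⟩
  · rw [Matrix.mul_assoc (X * B), diagonal_mul_diagonal, hXB, Matrix.mul_assoc,
      mul_eq_one_comm.mp hB, Matrix.mul_one]
  · rw [conjTranspose_mul, diagonal_conjTranspose, Matrix.mul_assoc,
      ← Matrix.mul_assoc (X * B)ᴴ, hdiag]
    simp only [diagonal_mul_diagonal]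
    congr 1
    funext j
    by_cases hj : σ j = 0 <;> simp [hj]

namespace IsSVD

variable {X Q : Matrix m n ℝ} {σ : n → ℝ} {B : Matrix n n ℝ}

theorem conjTranspose_mul_self_mul_diagonal (h : IsSVD X Q σ B) {d : n → ℝ}
    (hd : ∀ j, σ j = 0 → d j = 0) : Qᴴ * Q * diagonal d = diagonal d := by
  rw [h.conjTranspose_mul_self, diagonal_mul_diagonal]
  congr 1
  funext j
  by_cases hj : σ j = 0 <;> simp [hj, hd]

theorem mul_conjTranspose_mul_self (h : IsSVD X Q σ B) : Q * (Qᴴ * Q) = Q := by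
  refine mul_conjTranspose_mul_self_of_isIdempotentElem ?_
  rw [h.conjTranspose_mul_self, IsIdempotentElem, diagonal_mul_diagonal]
  congr 1
  funext j
  by_cases hj : σ j = 0 <;> simp [hj]

theorem trace_mul_diagonal_mul_conjTranspose (h : IsSVD X Q σ B) :
    trace (Q * diagonal σ * Qᴴ) = ∑ j, σ j := by
  rw [trace_mul_comm, ← Matrix.mul_assoc, h.conjTranspose_mul_self_mul_diagonal fun _ => id,
    trace_diagonal]

theorem sum_le_of_eq_mul [DecidableEq m] (h : IsSVD X Q σ B) {U : Matrix m k ℝ}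
    {V : Matrix k n ℝ} (hUV : X = U * V) :
    ∑ j, σ j ≤ 1 / 2 * trace (Uᴴ * U) + 1 / 2 * trace (Vᴴ * V) := by
  have hUQ : trace ((Uᴴ * Q)ᴴ * (Uᴴ * Q)) = trace (Uᴴ * (Q * Qᴴ) * U) := by
    rw [conjTranspose_mul, conjTranspose_conjTranspose, trace_mul_comm]
    simp only [Matrix.mul_assoc]
  have hVB : trace ((V * B)ᴴ * (V * B)) = trace (Vᴴ * V) := by
    rw [conjTranspose_mul, Matrix.mul_assoc, trace_mul_comm, Matrix.mul_assoc, Matrix.mul_assoc,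
      mul_eq_one_comm.mp h.orthogonal, Matrix.mul_one]
  calc ∑ j, σ j = trace (Qᴴ * Q * diagonal σ * (Bᴴ * B)) := by
        rw [h.orthogonal, Matrix.mul_one, h.conjTranspose_mul_self_mul_diagonal fun _ => id,
          trace_diagonal]
    _ = trace ((Uᴴ * Q)ᴴ * (V * B)) := by
        rw [conjTranspose_mul, conjTranspose_conjTranspose, Matrix.mul_assoc Qᴴ U,
          ← Matrix.mul_assoc U, ← hUV, h.eq_mul]
        simp only [Matrix.mul_assoc]
    _ ≤ 1 / 2 * trace ((Uᴴ * Q)ᴴ * (Uᴴ * Q)) + 1 / 2 * trace ((V * B)ᴴ * (V * B)) := by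
        linarith [two_mul_trace_conjTranspose_mul_le (Uᴴ * Q) (V * B)]
    _ ≤ 1 / 2 * trace (Uᴴ * U) + 1 / 2 * trace (Vᴴ * V) := by
        rw [hUQ, hVB]
        gcongr
        exact trace_conjTranspose_mul_mul_conjTranspose_mul_le h.mul_conjTranspose_mul_self U

theorem exists_eq_mul (h : IsSVD X Q σ B) : ∃ (U : Matrix m m ℝ) (V : Matrix m n ℝ),
    X = U * V ∧ trace (Uᴴ * U) = ∑ j, σ j ∧ trace (Vᴴ * V) = ∑ j, σ j := by
  set D : Matrix n n ℝ := diagonal fun j => √(σ j)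
  have hDH : Dᴴ = D := by simp [D]
  have hQD : Qᴴ * Q * D = D := h.conjTranspose_mul_self_mul_diagonal fun j hj => by simp [hj]
  have hDD : D * D = diagonal σ := by
    rw [diagonal_mul_diagonal]
    exact congrArg diagonal (funext fun j => Real.mul_self_sqrt (h.nonneg j))
  refine ⟨Q * D * Qᴴ, Q * D * Bᴴ, ?_, ?_, ?_⟩
  · rw [h.eq_mul, show Q * D * Qᴴ * (Q * D * Bᴴ) = Q * (D * (Qᴴ * Q * D)) * Bᴴ by
      simp only [Matrix.mul_assoc], hQD, hDD]
  · rw [conjTranspose_mul, conjTranspose_mul, conjTranspose_conjTranspose, hDH,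
      show Q * (D * Qᴴ) * (Q * D * Qᴴ) = Q * (D * (Qᴴ * Q * D)) * Qᴴ by
        simp only [Matrix.mul_assoc],
      hQD, hDD, h.trace_mul_diagonal_mul_conjTranspose]
  · rw [trace_mul_comm, conjTranspose_mul, conjTranspose_mul, conjTranspose_conjTranspose, hDH,
      show Q * D * Bᴴ * (B * (D * Qᴴ)) = Q * (D * (Bᴴ * B) * D) * Qᴴ by
        simp only [Matrix.mul_assoc],
      h.orthogonal, Matrix.mul_one, hDD, h.trace_mul_diagonal_mul_conjTranspose]

end IsSVD

end Matrix

section NuclearNorm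

variable {n₁ n₂ : ℕ} (X : Matrix (Fin n₁) (Fin n₂) ℝ)

theorem nuclearNorm_le_of_eq_mul {k : Type*} [Fintype k] {U : Matrix (Fin n₁) k ℝ}
    {V : Matrix k (Fin n₂) ℝ} (hUV : X = U * V) :
    nuclearNorm X ≤ 1 / 2 * trace (Uᴴ * U) + 1 / 2 * trace (Vᴴ * V) := by
  obtain ⟨Q, B, h⟩ := exists_isSVD X
  exact h.sum_le_of_eq_mul hUV

theorem exists_eq_mul_trace_eq_nuclearNorm :
    ∃ (U : Matrix (Fin n₁) (Fin n₁) ℝ) (V : Matrix (Fin n₁) (Fin n₂) ℝ),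
      X = U * V ∧ trace (Uᴴ * U) = nuclearNorm X ∧ trace (Vᴴ * V) = nuclearNorm X := by
  obtain ⟨Q, B, h⟩ := exists_isSVD X
  exact h.exists_eq_mul

open scoped MatrixOrder in
theorem nuclearNorm_le_of_posDef {S : Matrix (Fin n₁) (Fin n₁) ℝ} (hS : S.PosDef) :
    nuclearNorm X ≤ 1 / 2 * trace ((S * X)ᴴ * X) + 1 / 2 * trace S⁻¹ := by
  obtain ⟨R, hR, rfl⟩ :=
    CStarAlgebra.isStrictlyPositive_iff_eq_star_mul_self.mp hS.isStrictlyPositive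
  have h := nuclearNorm_le_of_eq_mul X
    (nonsing_inv_mul_cancel_left R X ((isUnit_iff_isUnit_det R).mp hR)).symm
  have hinv : trace (R⁻¹ᴴ * R⁻¹) = trace (star R * R)⁻¹ := by
    rw [Matrix.mul_inv_rev, trace_mul_comm, conjTranspose_nonsing_inv, star_eq_conjTranspose]
  have hquad : trace ((R * X)ᴴ * (R * X)) = trace ((star R * R * X)ᴴ * X) := by
    simp only [conjTranspose_mul, star_eq_conjTranspose, conjTranspose_conjTranspose,
      Matrix.mul_assoc]
  rwa [hinv, hquad, add_comm (1 / 2 * trace _)] at h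

theorem exists_posDef_lt_nuclearNorm_add {ε : ℝ} (hε : 0 < ε) :
    ∃ S : Matrix (Fin n₁) (Fin n₁) ℝ, S.PosDef ∧
      1 / 2 * trace ((S * X)ᴴ * X) + 1 / 2 * trace S⁻¹ < nuclearNorm X + ε := by
  obtain ⟨U, V, hUV, hU, hV⟩ := exists_eq_mul_trace_eq_nuclearNorm X
  set δ := ε / (n₁ + 1)
  have hδ : 0 < δ := by positivity
  have hδn : δ * n₁ < ε := by
    rw [div_mul_eq_mul_div, div_lt_iff₀ (by positivity)]
    nlinarith
  have hA := posDef_mul_conjTranspose_self_add_smul_one U hδ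
  refine ⟨(U * Uᴴ + δ • 1)⁻¹, hA.inv, ?_⟩
  have hquad := trace_inv_add_smul_one_mul_le U V hδ
  rw [← hUV, hV] at hquad
  have htr : trace (U * Uᴴ + δ • 1)⁻¹⁻¹ = nuclearNorm X + δ * n₁ := by
    rw [nonsing_inv_nonsing_inv _ ((isUnit_iff_isUnit_det _).mp hA.isUnit), trace_add,
      trace_mul_comm, hU, trace_smul, trace_one, Fintype.card_fin, smul_eq_mul]
  rw [htr]
  linarith

end NuclearNorm

/-- Quadratic variational form of the nuclear norm.  For every
`X ∈ ℝ^{n₁×n₂}`: `‖X‖_*` is the attained minimum of `½‖U‖_F² + ½‖V‖_F²`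
over factorizations `X = UV` with `U ∈ ℝ^{n₁×n₁}`, `V ∈ ℝ^{n₁×n₂}`; and
`‖X‖_*` equals the infimum over positive definite symmetric `Σ ∈ ℝ^{n₁×n₁}`
of `½⟨ΣX, X⟩_F + ½ tr(Σ⁻¹)`. -/
theorem statement19 {n₁ n₂ : ℕ} (X : Matrix (Fin n₁) (Fin n₂) ℝ) :
    IsLeast { c : ℝ | ∃ (U : Matrix (Fin n₁) (Fin n₁) ℝ) (V : Matrix (Fin n₁) (Fin n₂) ℝ),
        X = U * V ∧
        c = (1/2) * (∑ i, ∑ j, (U i j)^2) + (1/2) * ∑ i, ∑ j, (V i j)^2 }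
      (nuclearNorm X)
    ∧
    nuclearNorm X = sInf { c : ℝ | ∃ S : Matrix (Fin n₁) (Fin n₁) ℝ,
        S.PosDef ∧
        c = (1/2) * (∑ i, ∑ j, (S * X) i j * X i j) + (1/2) * (S⁻¹).trace } := by
  simp only [sum_sum_sq_eq_trace_conjTranspose_mul_self, sum_sum_mul_eq_trace_conjTranspose_mul]
  refine ⟨⟨?_, ?_⟩, ?_⟩
  · obtain ⟨U, V, hUV, hU, hV⟩ := exists_eq_mul_trace_eq_nuclearNorm X
    exact ⟨U, V, hUV, by rw [hU, hV]; ring⟩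
  · rintro c ⟨U, V, hUV, rfl⟩
    exact nuclearNorm_le_of_eq_mul X hUV
  · refine .symm <| IsGLB.csInf_eq ⟨?_, fun b hb => le_of_forall_pos_lt_add fun ε hε => ?_⟩
      ⟨_, 1, PosDef.one, rfl⟩
    · rintro c ⟨S, hS, rfl⟩
      exact nuclearNorm_le_of_posDef X hS
    · obtain ⟨S, hS, hlt⟩ := exists_posDef_lt_nuclearNorm_add X hε
      exact (hb ⟨S, hS, rfl⟩).trans_lt hlt
end
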